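/- Let A = λI + μθ with λ ≠ 0, θ the matrix with rows (0,-1),(1,0), η ∈ ℝ² nonzero, and v(u) = -u(A - uθ)⁻¹η. Then the derivative v'(u) is nonzero for every u (with λ²+(μ-u)² ≠ 0), i.e. v'(u) = 0 would force η = 0. -/

import Mathlib

/-!
Write `M(u) = A - u • θ`. Differentiating `-u • M(u)⁻¹` gives
`-M⁻¹ - u • M⁻¹ θ M⁻¹ = -M⁻¹ (M + u • θ) M⁻¹ = -M⁻¹ A M⁻¹`, so `v'(u) = -(M(u)⁻¹ A M(u)⁻¹) η`.
Since `λ ≠ 0`, both `det A = λ² + μ²` and `det M(u) = λ² + (μ - u)²` are nonzero, so this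
matrix is invertible and `v'(u) = 0` forces `η = 0`.
-/

noncomputable section
open Real Matrix

def toV (x : Fin 2 → ℝ) : EuclideanSpace ℝ (Fin 2) := WithLp.toLp 2 x

def th : Matrix (Fin 2) (Fin 2) ℝ := !![0, -1; 1, 0]

section NormedAlgebra

variable {𝕜 R : Type*} [NontriviallyNormedField 𝕜] [NormedRing R] [NormedAlgebra 𝕜 R]
  [HasSummableGeomSeries R]

theorem hasDerivAt_ringInverse_sub_smul (a t : R) {u : 𝕜} (hu : IsUnit (a - u • t)) :
    HasDerivAt (fun u' : 𝕜 => Ring.inverse (a - u' • t))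
      (Ring.inverse (a - u • t) * t * Ring.inverse (a - u • t)) u := by
  obtain ⟨x, hx⟩ := hu
  have hinv := hasFDerivAt_ringInverse (𝕜 := 𝕜) x
  rw [hx] at hinv
  have hlin : HasDerivAt (fun u' : 𝕜 => a - u' • t) (-t) u := by
    simpa using ((hasDerivAt_id u).smul_const t).const_sub a
  rw [← hx, Ring.inverse_unit]
  refine (hinv.comp_hasDerivAt u hlin).congr_deriv ?_
  simp

theorem hasDerivAt_neg_smul_ringInverse_sub_smul (a t : R) {u : 𝕜} (hu : IsUnit (a - u • t)) :
    HasDerivAt (fun u' : 𝕜 => (-u') • Ring.inverse (a - u' • t))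
      (-(Ring.inverse (a - u • t) * a * Ring.inverse (a - u • t))) u := by
  refine ((hasDerivAt_neg u).smul (hasDerivAt_ringInverse_sub_smul a t hu)).congr_deriv ?_
  obtain ⟨x, hx⟩ := hu
  have ha : a = x + u • t := by rw [hx, sub_add_cancel]
  rw [← hx, Ring.inverse_unit, ha]
  simp only [mul_add, add_mul, Units.inv_mul, one_mul, mul_smul_comm, smul_mul_assoc]
  module

end NormedAlgebra

theorem hasDerivAt_neg_smul_inv_sub_smul_mulVec {n : Type*} [Fintype n] [DecidableEq n]
    (A T : Matrix n n ℝ) (η : n → ℝ) {u : ℝ} (hu : IsUnit (A - u • T).det) :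
    HasDerivAt (fun u' : ℝ => (-u') • ((A - u' • T)⁻¹ *ᵥ η))
      (-(((A - u • T)⁻¹ * A * (A - u • T)⁻¹) *ᵥ η)) u := by
  -- Any algebra norm on matrices will do: the statement only involves the topology of `n → ℝ`.
  let _ := Matrix.linftyOpNormedRing (n := n) (α := ℝ)
  let _ := Matrix.linftyOpNormedAlgebra (n := n) (R := ℝ) (α := ℝ)
  let L : Matrix n n ℝ →L[ℝ] (n → ℝ) := LinearMap.toContinuousLinearMap
    { toFun := fun X => X *ᵥ η, map_add' := fun X Y => add_mulVec X Y η,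
      map_smul' := fun c X => smul_mulVec c X η }
  simp only [nonsing_inv_eq_ringInverse, ← smul_mulVec, ← neg_mulVec]
  exact L.hasFDerivAt.comp_hasDerivAt u
    (hasDerivAt_neg_smul_ringInverse_sub_smul A T ((isUnit_iff_isUnit_det _).2 hu))

theorem det_smul_one_add_smul_th (a b : ℝ) :
    (a • (1 : Matrix (Fin 2) (Fin 2) ℝ) + b • th).det = a ^ 2 + b ^ 2 := by
  simp [th, det_fin_two, one_fin_two]
  ring

theorem hasDerivAt_toV {f : ℝ → Fin 2 → ℝ} {f' : Fin 2 → ℝ} {u : ℝ} (hf : HasDerivAt f f' u) :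
    HasDerivAt (fun u' => toV (f u')) (toV f') u :=
  (PiLp.continuousLinearEquiv 2 ℝ fun _ : Fin 2 => ℝ).symm.hasFDerivAt.comp_hasDerivAt u hf

theorem stmt12_general (lam mu : ℝ) (hlam : lam ≠ 0) (eta : Fin 2 → ℝ) (heta : eta ≠ 0)
    (A : Matrix (Fin 2) (Fin 2) ℝ)
    (hA : A = lam • (1 : Matrix (Fin 2) (Fin 2) ℝ) + mu • th)
    (u : ℝ) :
    deriv (fun u' : ℝ => toV ((-u') • ((A - u' • th)⁻¹.mulVec eta))) u ≠ 0 := by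
  have hM : A - u • th = lam • 1 + (mu - u) • th := by rw [hA, sub_smul]; abel
  have hdetA : A.det ≠ 0 := by
    rw [hA, det_smul_one_add_smul_th]; positivity
  have hdetM : (A - u • th).det ≠ 0 := by
    rw [hM, det_smul_one_add_smul_th]; positivity
  rw [(hasDerivAt_toV (hasDerivAt_neg_smul_inv_sub_smul_mulVec A th eta hdetM.isUnit)).deriv]
  intro h
  apply heta
  refine eq_zero_of_mulVec_eq_zero ?_ (neg_eq_zero.1 (congrArg WithLp.ofLp h))
  simp [det_nonsing_inv, hdetA, hdetM]

/-- Let `A = λI + μθ` with `λ ≠ 0` and `η ≠ 0`, and `v(u) = -u(A - uθ)⁻¹η`. Then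
`v'(u) ≠ 0` for every `u` (with `λ² + (μ-u)² ≠ 0`). -/
theorem stmt12 (lam mu : ℝ) (hlam : lam ≠ 0) (eta : Fin 2 → ℝ) (heta : eta ≠ 0)
    (A : Matrix (Fin 2) (Fin 2) ℝ)
    (hA : A = lam • (1 : Matrix (Fin 2) (Fin 2) ℝ) + mu • th)
    (u : ℝ) (hu : lam ^ 2 + (mu - u) ^ 2 ≠ 0) :
    deriv (fun u' : ℝ => toV ((-u') • ((A - u' • th)⁻¹.mulVec eta))) u ≠ 0 :=
  stmt12_general lam mu hlam eta heta A hA u
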